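/- arXiv:1312.3859 — 3 statements merged into one kernel-verified Lean document; each statement's English description precedes it below -/
import Mathlib

section
/- For every integer n ≥ 0 and all complex numbers b, c, u, v with b² + c² = 1, one has Σ_{k+ℓ=n, k,ℓ≥0} b^k c^ℓ H̃_k(u) H̃_ℓ(v) = H̃_n(bu + cv). -/
/-- Physicists' Hermite polynomial `H_n`, evaluated at a complex argument:
`H_n(x) = n! · Σ_{m=0}^{⌊n/2⌋} (−1)^m (2x)^{n−2m} / (m!(n−2m)!)`. -/
noncomputable def HC (n : ℕ) (x : ℂ) : ℂ :=
  (n.factorial : ℂ) * ∑ m ∈ Finset.range (n / 2 + 1),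
    (-1 : ℂ) ^ m * (2 * x) ^ (n - 2 * m) / ((m.factorial : ℂ) * ((n - 2 * m).factorial : ℂ))

/-- Normalized Hermite polynomial `H̃_n(x) = H_n(x)/n!`. -/
noncomputable def HtC (n : ℕ) (x : ℂ) : ℂ := HC n x / (n.factorial : ℂ)

/-!
`H̃_n(x)` is the coefficient of `t^n` in `exp(2xt − t²)`. Rescaling `t` by `b` and by `c` and
multiplying, the two generating functions combine to `exp(2(bu + cv)t − (b² + c²)t²)`, which is
the generating function at `bu + cv` once `b² + c² = 1`.
-/

namespace PowerSeries

theorem rescale_expand_two {A : Type*} [CommRing A] (b : A) (f : A⟦X⟧) :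
    rescale b (expand 2 two_ne_zero f) = expand 2 two_ne_zero (rescale (b ^ 2) f) := by
  ext n
  simp only [coeff_rescale, coeff_expand]
  split_ifs with h
  · obtain ⟨m, rfl⟩ := h
    rw [Nat.mul_div_cancel_left m two_pos, pow_mul]
  · rw [mul_zero]

variable {A : Type*} [CommRing A] [Algebra ℚ A]

/-- The formal power series `exp(a X² + s X)`. -/
noncomputable def expQuadratic (a s : A) : A⟦X⟧ :=
  expand 2 two_ne_zero (rescale a (exp A)) * rescale s (exp A)

theorem expQuadratic_mul_expQuadratic (a s a' s' : A) :
    expQuadratic a s * expQuadratic a' s' = expQuadratic (a + a') (s + s') := by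
  rw [expQuadratic, expQuadratic, expQuadratic, ← exp_mul_exp_eq_exp_add,
    ← exp_mul_exp_eq_exp_add, map_mul]
  ring

theorem rescale_expQuadratic (b a s : A) :
    rescale b (expQuadratic a s) = expQuadratic (b ^ 2 * a) (b * s) := by
  rw [expQuadratic, expQuadratic, map_mul, rescale_expand_two, rescale_rescale, rescale_rescale,
    mul_comm a, mul_comm s]

end PowerSeries

open PowerSeries

theorem coeff_expQuadratic_neg_one_two_mul (n : ℕ) (x : ℂ) :
    coeff n (expQuadratic (-1) (2 * x)) = HtC n x := by
  have hfac : (n.factorial : ℂ) ≠ 0 := Nat.cast_ne_zero.mpr n.factorial_ne_zero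
  rw [HtC, HC, mul_div_cancel_left₀ _ hfac, expQuadratic, coeff_mul]
  symm
  refine Finset.sum_of_injOn (fun m => (2 * m, n - 2 * m)) ?_ ?_ ?_ ?_
  · intro m _ m' _ h
    simp only [Prod.mk.injEq] at h
    omega
  · intro m hm
    simp only [Finset.coe_range, Set.mem_Iio] at hm
    rw [Finset.mem_coe, Finset.HasAntidiagonal.mem_antidiagonal]
    dsimp only
    omega
  · rintro ⟨i, j⟩ hij hne
    rw [Finset.HasAntidiagonal.mem_antidiagonal] at hij
    rw [coeff_expand_of_not_dvd _ _ _ ?_, zero_mul]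
    rintro ⟨m, rfl⟩
    exact hne ⟨m, by simp only [Finset.coe_range, Set.mem_Iio]; omega,
      Prod.ext rfl (by dsimp only; omega)⟩
  · intro m _
    simp only [coeff_expand_mul, coeff_rescale, coeff_exp, map_div₀, map_one, map_natCast]
    ring

/-- For `b² + c² = 1`: `Σ_{k+ℓ=n} b^k c^ℓ H̃_k(u) H̃_ℓ(v) = H̃_n(bu + cv)`. -/
theorem hermite_addition_one (n : ℕ) (b c u v : ℂ) (h : b ^ 2 + c ^ 2 = 1) :
    ∑ p ∈ Finset.HasAntidiagonal.antidiagonal n, b ^ p.1 * c ^ p.2 * HtC p.1 u * HtC p.2 v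
      = HtC n (b * u + c * v) := by
  have hquad : b ^ 2 * -1 + c ^ 2 * -1 = -1 := by linear_combination -h
  have hlin : b * (2 * u) + c * (2 * v) = 2 * (b * u + c * v) := by ring
  calc ∑ p ∈ Finset.HasAntidiagonal.antidiagonal n, b ^ p.1 * c ^ p.2 * HtC p.1 u * HtC p.2 v
      = coeff n (rescale b (expQuadratic (-1) (2 * u)) * rescale c (expQuadratic (-1) (2 * v))) := by
        simp only [coeff_mul, coeff_rescale, coeff_expQuadratic_neg_one_two_mul]
        exact Finset.sum_congr rfl fun p _ => by ring
    _ = coeff n (expQuadratic (-1) (2 * (b * u + c * v))) := by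
        rw [rescale_expQuadratic, rescale_expQuadratic, expQuadratic_mul_expQuadratic, hquad, hlin]
    _ = HtC n (b * u + c * v) := coeff_expQuadratic_neg_one_two_mul n _
end

section
/- For every integer n ≥ 0 and all complex numbers b, c, u, v with b² + c² = −1, one has Σ_{k+ℓ=n, k,ℓ≥0} b^k c^ℓ H̃_k(u) H̃_ℓ(v) = P_n(bu + cv). -/
/-- The polynomial `P_n`, determined by `P_n(x) = i^{−n}·H̃_n(i x)`. -/
noncomputable def PC (n : ℕ) (x : ℂ) : ℂ :=
  Complex.I ^ (-(n : ℤ)) * HtC n (Complex.I * x)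

/-!
`H̃_n(x)` is the coefficient of `tⁿ` in `exp (2xt - t²)` and `P_n(x)` that of `exp (2xt + t²)`.
Substituting `bt` for `t` turns the first series into `exp (2but - b²t²)`, so the left-hand side is
the coefficient of `tⁿ` in `exp (2(bu + cv)t - (b² + c²)t²)`, which for `b² + c² = -1` is the
generating series of `P_n`.
-/

open PowerSeries Finset

theorem PowerSeries.rescale_expand {R : Type*} [CommRing R] (p : ℕ) (hp : p ≠ 0) (a : R)
    (f : R⟦X⟧) : rescale a (expand p hp f) = expand p hp (rescale (a ^ p) f) := by
  ext n
  rw [coeff_rescale, coeff_expand, coeff_expand]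
  split_ifs with h
  · obtain ⟨m, rfl⟩ := h
    rw [coeff_rescale, Nat.mul_div_cancel_left _ (Nat.pos_of_ne_zero hp), pow_mul]
  · exact mul_zero _

theorem PowerSeries.coeff_mul_expand_two {R : Type*} [CommRing R] (f g : R⟦X⟧) (n : ℕ) :
    coeff n (f * expand 2 two_ne_zero g) =
      ∑ m ∈ range (n / 2 + 1), coeff (n - 2 * m) f * coeff m g := by
  rw [coeff_mul, ← Nat.sum_antidiagonal_swap, Nat.sum_antidiagonal_eq_sum_range_succ_mk]
  simp only [Prod.swap_prod_mk, coeff_expand]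
  have h_image : (range (n / 2 + 1)).image (2 * ·) ⊆ range (n + 1) := by
    intro k hk
    simp only [mem_image, mem_range] at hk ⊢
    omega
  rw [← sum_subset h_image, sum_image (fun _ _ _ _ h => by simpa using h)]
  · refine sum_congr rfl fun m _ => ?_
    simp
  · intro k hk hk_image
    rw [if_neg, mul_zero]
    rintro ⟨m, rfl⟩
    simp only [mem_image, mem_range, not_exists, not_and] at hk hk_image
    exact hk_image m (by omega) rfl

/-- The generating series `exp (2 x t - s t²)` in the variable `t`. -/
noncomputable def hermiteSeries {A : Type*} [CommRing A] [Algebra ℚ A] (x s : A) : A⟦X⟧ :=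
  rescale (2 * x) (exp A) * expand 2 two_ne_zero (rescale (-s) (exp A))

section
variable {A : Type*} [CommRing A] [Algebra ℚ A]

theorem hermiteSeries_mul (x y s r : A) :
    hermiteSeries x s * hermiteSeries y r = hermiteSeries (x + y) (s + r) := by
  simp only [hermiteSeries]
  rw [mul_mul_mul_comm, exp_mul_exp_eq_exp_add, ← map_mul, exp_mul_exp_eq_exp_add]
  ring_nf

theorem rescale_hermiteSeries (a x s : A) :
    rescale a (hermiteSeries x s) = hermiteSeries (a * x) (a ^ 2 * s) := by
  simp only [hermiteSeries, map_mul, rescale_expand, rescale_rescale]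
  ring_nf

end

theorem coeff_hermiteSeries {K : Type*} [Field K] [CharZero K] (x s : K) (n : ℕ) :
    coeff n (hermiteSeries x s) = ∑ m ∈ range (n / 2 + 1),
      (-s) ^ m * (2 * x) ^ (n - 2 * m) / ((m.factorial : K) * ((n - 2 * m).factorial : K)) := by
  rw [hermiteSeries, coeff_mul_expand_two]
  refine sum_congr rfl fun m _ => ?_
  simp only [coeff_rescale, coeff_exp, map_div₀, map_one, map_natCast]
  ring

theorem HtC_eq_coeff_hermiteSeries (n : ℕ) (x : ℂ) : HtC n x = coeff n (hermiteSeries x 1) := by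
  rw [coeff_hermiteSeries, HtC, HC, mul_div_cancel_left₀ _ (by exact_mod_cast n.factorial_ne_zero)]

theorem PC_eq_coeff_hermiteSeries (n : ℕ) (x : ℂ) : PC n x = coeff n (hermiteSeries x (-1)) := by
  rw [PC, HtC_eq_coeff_hermiteSeries, coeff_hermiteSeries, coeff_hermiteSeries, mul_sum]
  refine sum_congr rfl fun m hm => ?_
  have hI : Complex.I ^ n = Complex.I ^ (n - 2 * m) * (-1) ^ m := by
    rw [← Complex.I_sq, ← pow_mul, ← pow_add, Nat.sub_add_cancel (by grind)]
  rw [zpow_neg, zpow_natCast, hI, mul_pow]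
  field_simp
  ring

/-- For `b² + c² = −1`: `Σ_{k+ℓ=n} b^k c^ℓ H̃_k(u) H̃_ℓ(v) = P_n(bu + cv)`. -/
theorem hermite_addition_neg_one (n : ℕ) (b c u v : ℂ) (h : b ^ 2 + c ^ 2 = -1) :
    ∑ p ∈ Finset.HasAntidiagonal.antidiagonal n, b ^ p.1 * c ^ p.2 * HtC p.1 u * HtC p.2 v
      = PC n (b * u + c * v) := by
  calc ∑ p ∈ antidiagonal n, b ^ p.1 * c ^ p.2 * HtC p.1 u * HtC p.2 v
      = coeff n (rescale b (hermiteSeries u 1) * rescale c (hermiteSeries v 1)) := by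
        rw [coeff_mul]
        refine sum_congr rfl fun p _ => ?_
        simp only [coeff_rescale, HtC_eq_coeff_hermiteSeries]
        ring
    _ = coeff n (hermiteSeries (b * u + c * v) (-1)) := by
        rw [rescale_hermiteSeries, rescale_hermiteSeries, hermiteSeries_mul, mul_one, mul_one, h]
    _ = PC n (b * u + c * v) := (PC_eq_coeff_hermiteSeries _ _).symm
end

section
/- Let M be an n×n matrix over a commutative ring, let 1 ≤ i_1 < i_2 < … < i_ℓ ≤ n, and let Y_1, …, Y_ℓ be column vectors of length n. Then the determinant of the ℓ×ℓ matrix whose (r,s) entry is det(M⟨i_r ← Y_s⟩) equals det(M)^{ℓ−1} · det(M⟨i_1 ← Y_1, …, i_ℓ ← Y_ℓ⟩). -/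
/-- `M⟨i₁ ← Y₁, …⟩`: the matrix obtained from `M` by simultaneously replacing the columns in
positions `idx s` by `Y s` (for `idx` injective, `h.choose` is the unique such `s`). -/
noncomputable def replaceColumns {R : Type*} [CommRing R] {n ℓ : ℕ}
    (M : Matrix (Fin n) (Fin n) R) (idx : Fin ℓ → Fin n) (Y : Fin ℓ → Fin n → R) :
    Matrix (Fin n) (Fin n) R :=
  Matrix.of fun a b => if h : ∃ s, idx s = b then Y h.choose a else M a b

/-!
Put `B = adj M * M⟨i ← Y⟩`. By Cramer's rule the column `i_s` of `B` is `(det M⟨a ← Y_s⟩)_a`,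
while every other column of `B` is `det M` times a standard basis vector, so
`det B = det[(det M⟨i_r ← Y_s⟩)] * (det M)^(n-ℓ)`; on the other hand
`det B = (det M)^(n-1) * det M⟨i ← Y⟩`. Cancelling `(det M)^(n-ℓ)` proves the identity when
`det M` is regular, and the general case is the specialization `X = 0` of the identity for
`X • 1 + M` over `R[X]`, whose determinant is monic.
-/

open Matrix Polynomial

namespace Matrix

variable {R : Type*} [CommRing R]

/-- Reordering `ι` as `range e ⊕ (range e)ᶜ` makes `B` block lower triangular. -/
theorem det_eq_det_submatrix_mul_pow_of_apply_eq {ι κ : Type*} [Fintype ι] [DecidableEq ι]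
    [Fintype κ] [DecidableEq κ] (B : Matrix ι ι R) {e : κ → ι} (he : Function.Injective e)
    (d : R) (hB : ∀ a, ∀ b ∉ Set.range e, B a b = if a = b then d else 0) :
    B.det = (B.submatrix e e).det * d ^ (Fintype.card ι - Fintype.card κ) := by
  let σ : κ ⊕ ↥(Set.range e)ᶜ ≃ ι :=
    (Equiv.sumCongr (Equiv.ofInjective e he) (Equiv.refl _)).trans
      (Equiv.Set.sumCompl (Set.range e))
  have hblocks : B.submatrix σ σ =
      fromBlocks (B.submatrix e e) 0 (of fun (x : ↥(Set.range e)ᶜ) s => B x (e s))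
        (d • (1 : Matrix ↥(Set.range e)ᶜ ↥(Set.range e)ᶜ R)) := by
    ext (r | x) (s | y)
    · rfl
    · have hne : e r ≠ y := fun h => y.2 ⟨r, h⟩
      simp [σ, hB _ _ y.2, hne]
    · rfl
    · simp [σ, hB _ _ y.2, one_apply, Subtype.ext_iff]
  have hcard : Fintype.card ↥(Set.range e)ᶜ = Fintype.card ι - Fintype.card κ := by
    rw [Fintype.card_compl_set, Set.card_range_of_injective he]
  rw [← det_submatrix_equiv_self σ, hblocks, det_fromBlocks_zero₁₂, det_smul, det_one, hcard,
    mul_one]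

end Matrix

section replaceColumns

variable {R : Type*} [CommRing R] {n ℓ : ℕ}

theorem replaceColumns_apply_self (M : Matrix (Fin n) (Fin n) R) {idx : Fin ℓ → Fin n}
    (hidx : Function.Injective idx) (Y : Fin ℓ → Fin n → R) (a : Fin n) (s : Fin ℓ) :
    replaceColumns M idx Y a (idx s) = Y s a := by
  have h : ∃ t, idx t = idx s := ⟨s, rfl⟩
  simp only [replaceColumns, of_apply, dif_pos h, hidx h.choose_spec]

theorem replaceColumns_apply_of_notMem (M : Matrix (Fin n) (Fin n) R) (idx : Fin ℓ → Fin n)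
    (Y : Fin ℓ → Fin n → R) (a : Fin n) {b : Fin n} (hb : b ∉ Set.range idx) :
    replaceColumns M idx Y a b = M a b :=
  dif_neg hb

theorem map_replaceColumns {S : Type*} [CommRing S] (f : R →+* S)
    (M : Matrix (Fin n) (Fin n) R) (idx : Fin ℓ → Fin n) (Y : Fin ℓ → Fin n → R) :
    (replaceColumns M idx Y).map f = replaceColumns (M.map f) idx (fun s => f ∘ Y s) := by
  ext a b
  simp only [replaceColumns, map_apply, of_apply, apply_dite f, Function.comp_apply]

theorem adjugate_mul_replaceColumns_apply_self (M : Matrix (Fin n) (Fin n) R)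
    {idx : Fin ℓ → Fin n} (hidx : Function.Injective idx) (Y : Fin ℓ → Fin n → R)
    (a : Fin n) (s : Fin ℓ) :
    (M.adjugate * replaceColumns M idx Y) a (idx s) = (M.updateCol a (Y s)).det := by
  rw [← cramer_apply, cramer_eq_adjugate_mulVec, mul_apply]
  simp only [mulVec, dotProduct, replaceColumns_apply_self M hidx]

theorem adjugate_mul_replaceColumns_apply_of_notMem (M : Matrix (Fin n) (Fin n) R)
    (idx : Fin ℓ → Fin n) (Y : Fin ℓ → Fin n → R) (a : Fin n) {b : Fin n}
    (hb : b ∉ Set.range idx) :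
    (M.adjugate * replaceColumns M idx Y) a b = if a = b then M.det else 0 := by
  have hcol : (M.adjugate * replaceColumns M idx Y) a b = (M.adjugate * M) a b := by
    simp only [mul_apply, replaceColumns_apply_of_notMem M idx Y _ hb]
  rw [hcol, adjugate_mul, Matrix.smul_apply, one_apply, smul_eq_mul, mul_ite, mul_one, mul_zero]

theorem det_updateCol_minors_mul_det_pow (M : Matrix (Fin n) (Fin n) R)
    {idx : Fin ℓ → Fin n} (hidx : Function.Injective idx) (Y : Fin ℓ → Fin n → R) :
    (of fun r s => (M.updateCol (idx r) (Y s)).det).det * M.det ^ (n - ℓ)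
      = M.det ^ (n - 1) * (replaceColumns M idx Y).det := by
  have hsub : (M.adjugate * replaceColumns M idx Y).submatrix idx idx
      = of fun r s => (M.updateCol (idx r) (Y s)).det := by
    ext r s
    exact adjugate_mul_replaceColumns_apply_self M hidx Y (idx r) s
  have hblock := det_eq_det_submatrix_mul_pow_of_apply_eq _ hidx M.det
    (adjugate_mul_replaceColumns_apply_of_notMem M idx Y)
  rw [hsub, Fintype.card_fin, Fintype.card_fin, det_mul, det_adjugate, Fintype.card_fin] at hblock
  exact hblock.symm

theorem higher_fay_of_isRegular (M : Matrix (Fin n) (Fin n) R) (hM : IsRegular M.det)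
    {idx : Fin ℓ → Fin n} (hidx : Function.Injective idx) (hℓ : 1 ≤ ℓ) (Y : Fin ℓ → Fin n → R) :
    (of fun r s => (M.updateCol (idx r) (Y s)).det).det
      = M.det ^ (ℓ - 1) * (replaceColumns M idx Y).det := by
  have hℓn : ℓ ≤ n := by simpa using Fintype.card_le_of_injective idx hidx
  apply (hM.pow (n - ℓ)).right
  beta_reduce
  rw [det_updateCol_minors_mul_det_pow M hidx Y, mul_right_comm, ← pow_add]
  congr 2
  omega

end replaceColumns

/-- "Higher Fay identity": for columns `Y₁,…,Y_ℓ` and positions `i₁ < … < i_ℓ`,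
`det[(det M⟨i_r ← Y_s⟩)_{r,s}] = (det M)^{ℓ−1} · det M⟨i₁ ← Y₁, …, i_ℓ ← Y_ℓ⟩`. -/
theorem higher_fay {R : Type*} [CommRing R] {n ℓ : ℕ} (hℓ : 1 ≤ ℓ)
    (M : Matrix (Fin n) (Fin n) R) (idx : Fin ℓ → Fin n) (hidx : StrictMono idx)
    (Y : Fin ℓ → Fin n → R) :
    (Matrix.of fun r s : Fin ℓ => (M.updateCol (idx r) (Y s)).det).det
      = M.det ^ (ℓ - 1) * (replaceColumns M idx Y).det := by
  set A : Matrix (Fin n) (Fin n) R[X] := (X : R[X]) • 1 + M.map C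
  have hA : IsRegular A.det := Monic.isRegular (leadingCoeff_det_X_one_add_C M)
  have hA₀ : A.map (evalRingHom 0) = M := by
    ext i j
    by_cases hij : i = j <;> simp [A, one_apply, hij]
  have hY₀ : ∀ s, evalRingHom 0 ∘ (C ∘ Y s) = Y s := fun s => by ext; simp
  have hminors : (of fun r s => (A.updateCol (idx r) (C ∘ Y s)).det).map (evalRingHom 0)
      = of fun r s => (M.updateCol (idx r) (Y s)).det := by
    ext r s
    simp only [map_apply, of_apply, RingHom.map_det, RingHom.mapMatrix_apply, map_updateCol, hA₀,
      hY₀]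
  have h := congrArg (evalRingHom 0)
    (higher_fay_of_isRegular A hA hidx.injective hℓ (fun s => C ∘ Y s))
  rwa [RingHom.map_det, RingHom.mapMatrix_apply, hminors, map_mul, map_pow, RingHom.map_det,
    RingHom.mapMatrix_apply, hA₀, RingHom.map_det, RingHom.mapMatrix_apply, map_replaceColumns,
    hA₀, funext hY₀] at h
end
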